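/- arXiv:1806.04294 — 2 statements merged into one kernel-verified Lean document; each statement's English description precedes it below -/
import Mathlib

section
/- Let f = f₁⊘f₀ be a nonconstant tropical meromorphic function with reduced representation [f₀:f₁], and let a = [a₁:a₀] ∈ TP¹ define P(x₀,x₁) = max(a₀+x₀, a₁+x₁), with scalar value a = a₀−a₁. (I) If a₁ ∈ ℝ and f⊕a ≡ f (for example a = −∞, i.e. a₀ = −∞), then P∘f = a₁ + f₁ and N(r, 1₀⊘(P∘f)) = N(r, 1₀⊘(f⊕a)). (II) If a₀ ∈ ℝ and f⊕a ≡ a (for example a = +∞, i.e. a₁ = −∞), then P∘f = a₀ + f₀ and N(r, 1₀⊘(P∘f)) = N(r, f); moreover, if additionally a₁ ∈ ℝ (so that a is finite), then N(r, 1₀⊘(f⊕a)) = 0. -/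
open Filter MeasureTheory Topology
open scoped Classical

noncomputable section

namespace TropNev

/-- `f` is tropical meromorphic: continuous and piecewise linear
(affine on a small interval on each side of every point). -/
def IsTropMero (f : ℝ → ℝ) : Prop :=
  Continuous f ∧ ∀ x : ℝ, ∃ ε > (0:ℝ), ∃ sR sL : ℝ,
    (∀ t ∈ Set.Icc x (x + ε), f t = f x + sR * (t - x)) ∧
    (∀ t ∈ Set.Icc (x - ε) x, f t = f x + sL * (t - x))

/-- ω_f(x): right derivative minus left derivative. -/
def omega (f : ℝ → ℝ) (x : ℝ) : ℝ :=
  derivWithin f (Set.Ici x) x - derivWithin f (Set.Iic x) x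

/-- tropical entire: tropical meromorphic with no poles. -/
def IsTropEntire (f : ℝ → ℝ) : Prop :=
  IsTropMero f ∧ ∀ x : ℝ, 0 ≤ omega f x

/-- tropical proximity function m(r,f). -/
def prox (f : ℝ → ℝ) (r : ℝ) : ℝ := (max (f r) 0 + max (f (-r)) 0) / 2

/-- tropical counting function of poles N(r,f). -/
def countN (f : ℝ → ℝ) (r : ℝ) : ℝ :=
  (1 / 2) * ∑' b : ℝ, if |b| < r ∧ omega f b < 0 then -omega f b * (r - |b|) else 0

/-- N(r, 1₀ ⊘ g): counting function of the roots of g. -/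
def countNroots (g : ℝ → ℝ) (r : ℝ) : ℝ := countN (fun x => -g x) r

/-- tropical Nevanlinna characteristic T(r,f). -/
def charT (f : ℝ → ℝ) (r : ℝ) : ℝ := prox f r + countN f r

/-- limsup_{r→∞} h(r) = 0 (in the real-analysis sense). -/
def LimsupZero (h : ℝ → ℝ) : Prop :=
  (∀ ε : ℝ, 0 < ε → ∀ᶠ r : ℝ in atTop, h r < ε) ∧
  (∀ ε : ℝ, 0 < ε → ∃ᶠ r : ℝ in atTop, -ε < h r)

/-- liminf_{r→∞} h(r) = 0 (in the real-analysis sense). -/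
def LiminfZero (h : ℝ → ℝ) : Prop :=
  (∀ ε : ℝ, 0 < ε → ∃ᶠ r : ℝ in atTop, h r < ε) ∧
  (∀ ε : ℝ, 0 < ε → ∀ᶠ r : ℝ in atTop, -ε < h r)

/-- E ⊆ [1,∞) has zero upper density. -/
def ZeroUpperDensity (E : Set ℝ) : Prop :=
  LimsupZero fun r => (volume (E ∩ Set.Icc 1 r)).toReal / r

/-- E ⊆ [1,∞) has zero lower density. -/
def ZeroLowerDensity (E : Set ℝ) : Prop :=
  LiminfZero fun r => (volume (E ∩ Set.Icc 1 r)).toReal / r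

/-- max of finitely many reals. -/
def tmax {m : ℕ} (F : Fin (m + 1) → ℝ) : ℝ :=
  Finset.univ.sup' Finset.univ_nonempty F

/-- tropical holomorphic curve with reduced representation f₀,…,f_n :
all components tropical entire, with no common roots. -/
def IsTropCurve {n : ℕ} (f : Fin (n + 1) → ℝ → ℝ) : Prop :=
  (∀ k, IsTropEntire (f k)) ∧ ∀ x : ℝ, ∃ k, ¬ 0 < omega (f k) x

/-- tropical Cartan characteristic T_f(r). -/
def curveT {n : ℕ} (f : Fin (n + 1) → ℝ → ℝ) (r : ℝ) : ℝ :=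
  (tmax (fun k => f k r) + tmax (fun k => f k (-r))) / 2 - tmax fun k => f k 0

/-- homogeneous tropical polynomial of degree d in the variables x₀,…,x_n,
with coefficients in ℝ ∪ {−∞} indexed by the degree-d monomials
(i.e. multisets of size d over the variables), not all −∞. -/
structure TropPoly (n d : ℕ) where
  coeff : Sym (Fin (n + 1)) d → EReal
  nontriv : ∃ s, coeff s ≠ ⊥

/-- value of the monomial term c_I + i₀x₀+⋯+i_nx_n. -/
def TropPoly.term {n d : ℕ} (P : TropPoly n d) (s : Sym (Fin (n + 1)) d)
    (x : Fin (n + 1) → ℝ) : EReal :=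
  P.coeff s + (((Multiset.map x (s : Multiset (Fin (n + 1)))).sum : ℝ) : EReal)

def TropPoly.evalE {n d : ℕ} (P : TropPoly n d) (x : Fin (n + 1) → ℝ) : EReal :=
  Finset.univ.sup fun s => P.term s x

/-- the tropical hypersurface V_P : points where the maximum is attained
by at least two monomials. -/
def TropPoly.hyp {n d : ℕ} (P : TropPoly n d) : Set (Fin (n + 1) → ℝ) :=
  {x | ∃ s t : Sym (Fin (n + 1)) d, s ≠ t ∧
        P.term s x = P.evalE x ∧ P.term t x = P.evalE x}

/-- the composition P ∘ f. -/
def TropPoly.compo {n d : ℕ} (P : TropPoly n d) (f : Fin (n + 1) → ℝ → ℝ) : ℝ → ℝ :=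
  fun t => (P.evalE fun k => f k t).toReal

/-- ‖a‖ = max_I c_I for the coefficient vector of P. -/
def TropPoly.coeffNorm {n d : ℕ} (P : TropPoly n d) : ℝ :=
  (Finset.univ.sup fun s => P.coeff s).toReal

/-- tropical Weil function λ_{V_P}(f(x)) = d‖f(x)‖ + d‖a‖ − (P∘f)(x). -/
def weil {n d : ℕ} (P : TropPoly n d) (f : Fin (n + 1) → ℝ → ℝ) (x : ℝ) : ℝ :=
  d * tmax (fun k => f k x) + d * P.coeffNorm - P.compo f x

/-- proximity function m_f(r, V_P). -/
def proxCurve {n d : ℕ} (f : Fin (n + 1) → ℝ → ℝ) (P : TropPoly n d) (r : ℝ) : ℝ :=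
  (weil P f r + weil P f (-r)) / 2

/-- f is tropical algebraically nondegenerate. -/
def AlgNondeg {n : ℕ} (f : Fin (n + 1) → ℝ → ℝ) : Prop :=
  ∀ d : ℕ, 1 ≤ d → ∀ P : TropPoly n d, ∃ t : ℝ, (fun k => f k t) ∉ P.hyp

/-- f is tropical linearly nondegenerate. -/
def LinNondeg {n : ℕ} (f : Fin (n + 1) → ℝ → ℝ) : Prop :=
  ∀ P : TropPoly n 1, ∃ t : ℝ, (fun k => f k t) ∉ P.hyp

/-- Gondran–Minoux linear independence of a finite family of real functions. -/
def GMLinIndep {ι : Type*} [Fintype ι] [DecidableEq ι] (g : ι → ℝ → ℝ) : Prop :=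
  ¬ ∃ (I J : Finset ι) (a : ι → EReal),
      I.Nonempty ∧ J.Nonempty ∧ Disjoint I J ∧ I ∪ J = Finset.univ ∧
      (∃ i, a i ≠ ⊥) ∧
      ∀ x : ℝ, (I.sup fun i => a i + ((g i x : ℝ) : EReal)) =
        (J.sup fun j => a j + ((g j x : ℝ) : EReal))

/-- the degree-d tropical monomials f^I in f₀,…,f_n. -/
def monos {n : ℕ} (f : Fin (n + 1) → ℝ → ℝ) (d : ℕ) :
    Sym (Fin (n + 1)) d → ℝ → ℝ :=
  fun s x => (Multiset.map (fun k => f k x) (s : Multiset (Fin (n + 1)))).sum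

/-- Gondran–Minoux algebraic independence. -/
def GMAlgIndep {n : ℕ} (f : Fin (n + 1) → ℝ → ℝ) : Prop :=
  ∀ d : ℕ, 1 ≤ d → GMLinIndep (monos f d)

/-- F is a complete tropical linear combination of the family h :
every tropical-linear representation of F over h has all coefficients finite. -/
def TropComplete {ι : Type*} [Fintype ι] (h : ι → ℝ → ℝ) (F : ℝ → ℝ) : Prop :=
  ∀ a : ι → EReal,
    (∀ x : ℝ, ((F x : ℝ) : EReal) = Finset.univ.sup fun k => a k + ((h k x : ℝ) : EReal)) →
    ∀ k, a k ≠ ⊥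

/-- the tropical Casoratian with shift c. -/
def casorati {m : ℕ} (c : ℝ) (g : Fin (m + 1) → ℝ → ℝ) : ℝ → ℝ := fun x =>
  Finset.univ.sup' Finset.univ_nonempty
    fun π : Equiv.Perm (Fin (m + 1)) => ∑ j, g j (x + ((π j : ℕ) : ℝ) * c)

/-- tropical Cartan characteristic for a reduced representation [f₀:f₁] in TP¹. -/
def charT2 (f0 f1 : ℝ → ℝ) (r : ℝ) : ℝ :=
  (max (f0 r) (f1 r) + max (f0 (-r)) (f1 (-r))) / 2 - max (f0 0) (f1 0)

/-- reduced representation in TP¹: f₀, f₁ tropical entire with no common roots. -/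
def ReducedPair (f0 f1 : ℝ → ℝ) : Prop :=
  IsTropEntire f0 ∧ IsTropEntire f1 ∧ ∀ x : ℝ, ¬ (0 < omega f0 x ∧ 0 < omega f1 x)

/-- (P∘f)(x) = max(a₀+f₀(x), a₁+f₁(x)) for a TP¹ value [a₁:a₀]. -/
def pcomp (a0 a1 : EReal) (f0 f1 : ℝ → ℝ) : ℝ → ℝ := fun x =>
  ((a0 + ((f0 x : ℝ) : EReal)) ⊔ (a1 + ((f1 x : ℝ) : EReal))).toReal

/-- defect of a tropical holomorphic curve with respect to a tropical hypersurface. -/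
def curveDefect {n d : ℕ} (f : Fin (n + 1) → ℝ → ℝ) (P : TropPoly n d) : ℝ :=
  1 - Filter.limsup (fun r => countNroots (P.compo f) r / (d * curveT f r)) atTop

end TropNev

end

/-! Slope jumps are additive, so `ω (f₁ - f₀) = ω f₁ - ω f₀`. As `f₀` and `f₁` are convex
without common roots, at each point at most one of `ω f₀`, `ω f₁` is nonzero; hence the poles
of `f₁ ⊘ f₀` are exactly the roots of `f₀`, and those of `f₀ ⊘ f₁` the roots of `f₁`, with
multiplicities. In case (I) the hypothesis forces `P ∘ f = a₁ + f₁` and `f ⊕ a = f`; in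
case (II) it forces `P ∘ f = a₀ + f₀`, while `f ⊕ a` is the constant `a`. -/

namespace TropNev

open Set

theorem hasDerivWithinAt_Ici_of_eqOn_affine {g : ℝ → ℝ} {x ε s : ℝ} (hε : 0 < ε)
    (h : ∀ t ∈ Icc x (x + ε), g t = g x + s * (t - x)) :
    HasDerivWithinAt g s (Ici x) x := by
  have haff : HasDerivWithinAt (fun t => g x + s * (t - x)) s (Ici x) x := by
    simpa using ((((hasDerivAt_id x).sub_const x).const_mul s).const_add (g x)).hasDerivWithinAt
  refine haff.congr_of_eventuallyEq ?_ (by simp)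
  filter_upwards [Icc_mem_nhdsGE (by linarith : x < x + ε)] with t ht using h t ht

theorem hasDerivWithinAt_Iic_of_eqOn_affine {g : ℝ → ℝ} {x ε s : ℝ} (hε : 0 < ε)
    (h : ∀ t ∈ Icc (x - ε) x, g t = g x + s * (t - x)) :
    HasDerivWithinAt g s (Iic x) x := by
  have haff : HasDerivWithinAt (fun t => g x + s * (t - x)) s (Iic x) x := by
    simpa using ((((hasDerivAt_id x).sub_const x).const_mul s).const_add (g x)).hasDerivWithinAt
  refine haff.congr_of_eventuallyEq ?_ (by simp)
  filter_upwards [Icc_mem_nhdsLE (by linarith : x - ε < x)] with t ht using h t ht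

theorem IsTropMero.differentiableWithinAt_Ici {g : ℝ → ℝ} (hg : IsTropMero g) (x : ℝ) :
    DifferentiableWithinAt ℝ g (Ici x) x := by
  obtain ⟨ε, hε, sR, -, hR, -⟩ := hg.2 x
  exact (hasDerivWithinAt_Ici_of_eqOn_affine hε hR).differentiableWithinAt

theorem IsTropMero.differentiableWithinAt_Iic {g : ℝ → ℝ} (hg : IsTropMero g) (x : ℝ) :
    DifferentiableWithinAt ℝ g (Iic x) x := by
  obtain ⟨ε, hε, -, sL, -, hL⟩ := hg.2 x
  exact (hasDerivWithinAt_Iic_of_eqOn_affine hε hL).differentiableWithinAt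

theorem IsTropMero.omega_sub {g h : ℝ → ℝ} (hg : IsTropMero g) (hh : IsTropMero h) (x : ℝ) :
    omega (fun y => g y - h y) x = omega g x - omega h x := by
  rw [omega, omega, omega,
    derivWithin_fun_sub (hg.differentiableWithinAt_Ici x) (hh.differentiableWithinAt_Ici x),
    derivWithin_fun_sub (hg.differentiableWithinAt_Iic x) (hh.differentiableWithinAt_Iic x)]
  ring

theorem omega_neg (g : ℝ → ℝ) (x : ℝ) : omega (fun y => -g y) x = -omega g x := by
  rw [omega, omega, derivWithin.fun_neg, derivWithin.fun_neg]
  ring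

theorem omega_const_add (c : ℝ) (g : ℝ → ℝ) (x : ℝ) :
    omega (fun y => c + g y) x = omega g x := by
  rw [omega, omega, derivWithin_const_add, derivWithin_const_add]

theorem omega_const (c x : ℝ) : omega (fun _ => c) x = 0 := by
  simp [omega]

theorem countN_congr {g h : ℝ → ℝ} (hgh : ∀ b, min (omega g b) 0 = min (omega h b) 0)
    (r : ℝ) : countN g r = countN h r := by
  rw [countN, countN]
  congr 1
  refine tsum_congr fun b => ?_
  have hb := hgh b
  rcases lt_or_ge (omega g b) 0 with hg | hg <;> rcases lt_or_ge (omega h b) 0 with hh | hh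
  · rw [min_eq_left hg.le, min_eq_left hh.le] at hb
    simp [hh, hb]
  · rw [min_eq_left hg.le, min_eq_right hh] at hb
    exact absurd hb hg.ne
  · rw [min_eq_right hg, min_eq_left hh.le] at hb
    exact absurd hb.symm hh.ne
  · simp [hg.not_gt, hh.not_gt]

theorem countN_const (c r : ℝ) : countN (fun _ => c) r = 0 := by
  simp [countN, omega_const]

theorem countNroots_sub (g h : ℝ → ℝ) (r : ℝ) :
    countNroots (fun x => g x - h x) r = countN (fun x => h x - g x) r := by
  simp only [countNroots, neg_sub]

theorem countN_sub_eq_countNroots_const_add {g h : ℝ → ℝ} (hg : IsTropEntire g)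
    (hh : IsTropEntire h) (hgh : ∀ x, ¬ (0 < omega g x ∧ 0 < omega h x)) (c r : ℝ) :
    countN (fun x => g x - h x) r = countNroots (fun x => c + h x) r := by
  refine countN_congr (fun b => ?_) r
  rw [hg.1.omega_sub hh.1, omega_neg, omega_const_add]
  have hg0 := hg.2 b
  have hh0 := hh.2 b
  rcases hh0.lt_or_eq with hpos | hzero
  · have : omega g b = 0 := le_antisymm (not_lt.1 fun hgpos => hgh b ⟨hgpos, hpos⟩) hg0
    rw [this, zero_sub]
  · rw [← hzero, sub_zero, neg_zero, min_self, min_eq_right hg0]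

theorem pcomp_eq_right_of_sub_le {f0 f1 : ℝ → ℝ} {a0 : EReal} {a1 x : ℝ}
    (h : a0 - a1 ≤ ((f1 x - f0 x : ℝ) : EReal)) : pcomp a0 a1 f0 f1 x = a1 + f1 x := by
  induction a0 with
  | bot => simp [pcomp, ← EReal.coe_add]
  | coe c =>
    have hc : c + f0 x ≤ a1 + f1 x := by
      rw [← EReal.coe_sub, EReal.coe_le_coe_iff] at h
      linarith
    rw [pcomp, ← EReal.coe_add, ← EReal.coe_add, sup_eq_right.2 (EReal.coe_le_coe_iff.2 hc),
      EReal.toReal_coe]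
  | top =>
    rw [EReal.top_sub_coe, top_le_iff] at h
    exact absurd h (EReal.coe_ne_top _)

theorem pcomp_eq_left_of_le_sub {f0 f1 : ℝ → ℝ} {a0 x : ℝ} {a1 : EReal}
    (h : ((f1 x - f0 x : ℝ) : EReal) ≤ a0 - a1) : pcomp a0 a1 f0 f1 x = a0 + f0 x := by
  induction a1 with
  | bot => simp [pcomp, ← EReal.coe_add]
  | coe c =>
    have hc : c + f1 x ≤ a0 + f0 x := by
      rw [← EReal.coe_sub, EReal.coe_le_coe_iff] at h
      linarith
    rw [pcomp, ← EReal.coe_add, ← EReal.coe_add, sup_eq_left.2 (EReal.coe_le_coe_iff.2 hc),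
      EReal.toReal_coe]
  | top =>
    rw [EReal.sub_top, le_bot_iff] at h
    exact absurd h (EReal.coe_ne_bot _)

end TropNev

open TropNev Filter MeasureTheory Topology
theorem stmt12_general (f0 f1 : ℝ → ℝ) (hred : ReducedPair f0 f1)
    (f : ℝ → ℝ) (hfdef : f = fun x => f1 x - f0 x) :
    (∀ (a1 : ℝ) (a0 : EReal), a0 ≠ ⊤ →
      (∀ x : ℝ, ((f x : ℝ) : EReal) ⊔ (a0 - (a1 : EReal)) = ((f x : ℝ) : EReal)) →
      (∀ x : ℝ, pcomp a0 (a1 : EReal) f0 f1 x = a1 + f1 x) ∧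
      ∀ r : ℝ, countNroots (pcomp a0 (a1 : EReal) f0 f1) r =
        countNroots (fun x => (((f x : ℝ) : EReal) ⊔ (a0 - (a1 : EReal))).toReal) r) ∧
    (∀ (a0 : ℝ) (a1 : EReal), a1 ≠ ⊤ →
      (∀ x : ℝ, ((f x : ℝ) : EReal) ⊔ ((a0 : EReal) - a1) = (a0 : EReal) - a1) →
      (∀ x : ℝ, pcomp (a0 : EReal) a1 f0 f1 x = a0 + f0 x) ∧
      (∀ r : ℝ, countNroots (pcomp (a0 : EReal) a1 f0 f1) r = countN f r) ∧
      (∀ b : ℝ, a1 = (b : ℝ) → ∀ r : ℝ,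
        countNroots (fun x => (((f x : ℝ) : EReal) ⊔ ((a0 : EReal) - a1)).toReal) r
          = 0)) := by
  obtain ⟨hf0, hf1, hcoprime⟩ := hred
  subst hfdef
  constructor
  · intro a1 a0 _ hsup
    have hP x : pcomp a0 a1 f0 f1 x = a1 + f1 x :=
      pcomp_eq_right_of_sub_le (sup_eq_left.1 (hsup x))
    refine ⟨hP, fun r => ?_⟩
    simp only [funext hP, hsup, EReal.toReal_coe, countNroots_sub]
    exact (countN_sub_eq_countNroots_const_add hf0 hf1 hcoprime a1 r).symm
  · intro a0 a1 _ hsup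
    have hP x : pcomp a0 a1 f0 f1 x = a0 + f0 x :=
      pcomp_eq_left_of_le_sub (sup_eq_right.1 (hsup x))
    refine ⟨hP, fun r => ?_, fun b hb r => ?_⟩
    · rw [funext hP]
      exact (countN_sub_eq_countNroots_const_add hf1 hf0
        (fun x h => hcoprime x h.symm) a0 r).symm
    · subst hb
      have hconst : (fun x => (((f1 x - f0 x : ℝ) : EReal) ⊔ (a0 - b)).toReal) = fun _ => a0 - b :=
        funext fun x => by rw [hsup x, ← EReal.coe_sub, EReal.toReal_coe]
      rw [hconst, countNroots]
      exact countN_const _ r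

/-- special cases f⊕a ≡ f and f⊕a ≡ a. -/
theorem stmt12 (f0 f1 : ℝ → ℝ) (hred : ReducedPair f0 f1)
    (f : ℝ → ℝ) (hfdef : f = fun x => f1 x - f0 x)
    (hnc : ¬ ∃ k : ℝ, ∀ x : ℝ, f x = k) :
    (∀ (a1 : ℝ) (a0 : EReal), a0 ≠ ⊤ →
      (∀ x : ℝ, ((f x : ℝ) : EReal) ⊔ (a0 - (a1 : EReal)) = ((f x : ℝ) : EReal)) →
      (∀ x : ℝ, pcomp a0 (a1 : EReal) f0 f1 x = a1 + f1 x) ∧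
      ∀ r : ℝ, countNroots (pcomp a0 (a1 : EReal) f0 f1) r =
        countNroots (fun x => (((f x : ℝ) : EReal) ⊔ (a0 - (a1 : EReal))).toReal) r) ∧
    (∀ (a0 : ℝ) (a1 : EReal), a1 ≠ ⊤ →
      (∀ x : ℝ, ((f x : ℝ) : EReal) ⊔ ((a0 : EReal) - a1) = (a0 : EReal) - a1) →
      (∀ x : ℝ, pcomp (a0 : EReal) a1 f0 f1 x = a0 + f0 x) ∧
      (∀ r : ℝ, countNroots (pcomp (a0 : EReal) a1 f0 f1) r = countN f r) ∧
      (∀ b : ℝ, a1 = (b : ℝ) → ∀ r : ℝ,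
        countNroots (fun x => (((f x : ℝ) : EReal) ⊔ ((a0 : EReal) - a1)).toReal) r
          = 0)) :=
  stmt12_general f0 f1 hred f hfdef
end

section
/- Let f = f₁⊘f₀ be a nonconstant tropical meromorphic function with reduced representation f = [f₀:f₁], and let a_j = [a_{j1}:a_{j0}] (j = 1,…,q) be distinct values with a_{j0}, a_{j1} ∈ ℝ, defining P_j(x₀,x₁) = max(a_{j0}+x₀, a_{j1}+x₁) and scalar values a_j = a_{j0}−a_{j1}. If for every j = 1,…,q one has f⊕a_j ≢ f and f⊕a_j ≢ a_j, then ddg({P₁∘f,…,P_q∘f}) = 0, the degree of degeneracy being taken with respect to the Gondran–Minoux independent pair (f₀,f₁). -/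
open Filter MeasureTheory Topology
open scoped Classical

open TropNev Filter MeasureTheory Topology

lemma sup_fin_two (g : Fin 2 → EReal) : Finset.univ.sup g = g 0 ⊔ g 1 := by
  rw [show (Finset.univ : Finset (Fin 2)) = {0, 1} by decide]
  simp

/-- sufficient condition for ddg = 0. -/
theorem stmt14 {q : ℕ} (hq : 1 ≤ q)
    (f0 f1 : ℝ → ℝ) (hred : ReducedPair f0 f1)
    (f : ℝ → ℝ) (hfdef : f = fun x => f1 x - f0 x)
    (hnc : ¬ ∃ k : ℝ, ∀ x : ℝ, f x = k)
    (a0 a1 : Fin q → ℝ)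
    (hdist : Function.Injective fun j => a0 j - a1 j)
    (hcond : ∀ j : Fin q,
      ¬ (∀ x : ℝ, max (f x) (a0 j - a1 j) = f x) ∧
      ¬ (∀ x : ℝ, max (f x) (a0 j - a1 j) = a0 j - a1 j)) :
    (Finset.univ.filter fun j : Fin q =>
      ¬ TropComplete ![f0, f1] fun x => max (a0 j + f0 x) (a1 j + f1 x)).card = 0 := by
  rw [Finset.card_eq_zero, Finset.filter_eq_empty_iff]
  intro j _
  rw [not_not]
  intro a ha
  have hf : ∀ x, f x = f1 x - f0 x := fun x => by rw [hfdef]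
  have hcond1 := (hcond j).1
  have hcond2 := (hcond j).2
  push_neg at hcond1 hcond2
  obtain ⟨x1, hx1⟩ := hcond1
  obtain ⟨x2, hx2⟩ := hcond2
  have hx1' : f x1 < a0 j - a1 j := by
    by_contra h
    exact hx1 (max_eq_left (le_of_not_gt h))
  have hx2' : a0 j - a1 j < f x2 := by
    by_contra h
    exact hx2 (max_eq_right (le_of_not_gt h))
  have ha' : ∀ x : ℝ, ((max (a0 j + f0 x) (a1 j + f1 x) : ℝ) : EReal)
      = (a 0 + ((f0 x : ℝ) : EReal)) ⊔ (a 1 + ((f1 x : ℝ) : EReal)) := by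
    intro x
    have h := ha x
    rw [sup_fin_two] at h
    simpa using h
  have hA0 : a 0 ≠ ⊥ := by
    intro h0
    have hb : ∀ x : ℝ, ((max (a0 j + f0 x) (a1 j + f1 x) : ℝ) : EReal)
        = a 1 + ((f1 x : ℝ) : EReal) := by
      intro x
      rw [ha' x, h0, EReal.bot_add, bot_sup_eq]
    have h1b : a 1 ≠ ⊥ := by
      intro h1
      have := hb 0
      rw [h1, EReal.bot_add] at this
      exact EReal.coe_ne_bot _ this
    have h1t : a 1 ≠ ⊤ := by
      intro h1
      have := hb 0
      rw [h1, EReal.top_add_coe] at this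
      exact EReal.coe_ne_top _ this
    set c := (a 1).toReal with hcdef
    have hc : a 1 = ((c : ℝ) : EReal) := (EReal.coe_toReal h1t h1b).symm
    have hreal : ∀ x : ℝ, max (a0 j + f0 x) (a1 j + f1 x) = c + f1 x := by
      intro x
      have h := hb x
      rw [hc, ← EReal.coe_add] at h
      exact EReal.coe_injective h
    have hc1 : a0 j + f0 x1 = c + f1 x1 := by
      have h := hreal x1
      have e1 : a1 j + f1 x1 ≤ a0 j + f0 x1 := by
        have := hf x1; linarith
      rw [max_eq_left e1] at h
      exact h
    have hconst : ∀ x, f x = f x1 := by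
      intro x
      have h := hreal x
      rcases le_total (a1 j + f1 x) (a0 j + f0 x) with hle | hle
      · rw [max_eq_left hle] at h
        have h1 := hf x; have h2 := hf x1
        linarith
      · rw [max_eq_right hle] at h
        have h2 := hf x1
        exfalso; linarith
    exact hnc ⟨f x1, hconst⟩
  have hA1 : a 1 ≠ ⊥ := by
    intro h1
    have hb : ∀ x : ℝ, ((max (a0 j + f0 x) (a1 j + f1 x) : ℝ) : EReal)
        = a 0 + ((f0 x : ℝ) : EReal) := by
      intro x
      rw [ha' x, h1, EReal.bot_add, sup_bot_eq]
    have h0b : a 0 ≠ ⊥ := by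
      intro h0
      have := hb 0
      rw [h0, EReal.bot_add] at this
      exact EReal.coe_ne_bot _ this
    have h0t : a 0 ≠ ⊤ := by
      intro h0
      have := hb 0
      rw [h0, EReal.top_add_coe] at this
      exact EReal.coe_ne_top _ this
    set c := (a 0).toReal with hcdef
    have hc : a 0 = ((c : ℝ) : EReal) := (EReal.coe_toReal h0t h0b).symm
    have hreal : ∀ x : ℝ, max (a0 j + f0 x) (a1 j + f1 x) = c + f0 x := by
      intro x
      have h := hb x
      rw [hc, ← EReal.coe_add] at h
      exact EReal.coe_injective h
    have hc2 : a1 j + f1 x2 = c + f0 x2 := by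
      have h := hreal x2
      have e2 : a0 j + f0 x2 ≤ a1 j + f1 x2 := by
        have := hf x2; linarith
      rw [max_eq_right e2] at h
      exact h
    have hconst : ∀ x, f x = f x2 := by
      intro x
      have h := hreal x
      rcases le_total (a1 j + f1 x) (a0 j + f0 x) with hle | hle
      · rw [max_eq_left hle] at h
        have h2 := hf x2
        exfalso; linarith
      · rw [max_eq_right hle] at h
        have h1 := hf x; have h2 := hf x2
        linarith
    exact hnc ⟨f x2, hconst⟩
  intro k
  fin_cases k
  · exact hA0
  · exact hA1
end
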